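/- arXiv:1411.7405 — 4 statements merged into one kernel-verified Lean document; each statement's English description precedes it below -/
import Mathlib

section
/- (Theorem 1) Let n ≥ p, X ∈ ℝ^{n×p} full column rank with Puffer transform F = UD⁻¹Uᵀ from the skinny SVD X = UDVᵀ. Then for all λ ≥ 0 and all Y ∈ ℝⁿ, the Lasso applied to the preconditioned data (FX, FY) equals the soft-thresholded OLS estimator: argmin_b ‖FY − FXb‖₂² + λ‖b‖₁ = t_{λ/2}(β̂_OLS) where β̂_OLS = (XᵀX)⁻¹XᵀY. -/
open Matrix BigOperators

/-- Soft-thresholding at level `c`. -/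
noncomputable def softThreshold (c x : ℝ) : ℝ := Real.sign x * max (|x| - c) 0

lemma soft_key_c (c z t : ℝ) (hc0 : 0 ≤ c) :
    (t - softThreshold c z) ^ 2
      + ((softThreshold c z) ^ 2 - 2 * z * softThreshold c z
          + 2 * c * |softThreshold c z|)
      ≤ t ^ 2 - 2 * z * t + 2 * c * |t| := by
  rcases le_or_gt |z| c with h | h
  · have hs : softThreshold c z = 0 := by
      unfold softThreshold
      rw [max_eq_right (by linarith)]
      ring
    rw [hs]
    have h1 : z * t ≤ |z| * |t| := (le_abs_self _).trans (abs_mul z t).le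
    have h2 : |z| * |t| ≤ c * |t| := mul_le_mul_of_nonneg_right h (abs_nonneg t)
    simp only [abs_zero]
    nlinarith
  · rcases lt_trichotomy z 0 with hz | hz | hz
    · have hzc : z < -c := by rw [abs_of_neg hz] at h; linarith
      have hs : softThreshold c z = z + c := by
        unfold softThreshold
        rw [Real.sign_of_neg hz, abs_of_neg hz, max_eq_left (by linarith)]
        ring
      rw [hs, abs_of_nonpos (by linarith)]
      nlinarith [mul_nonneg hc0 (by linarith [neg_abs_le t] : (0:ℝ) ≤ |t| + t)]
    · simp [hz, abs_nonneg] at h; linarith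
    · have hzc : c < z := by rw [abs_of_pos hz] at h; linarith
      have hs : softThreshold c z = z - c := by
        unfold softThreshold
        rw [Real.sign_of_pos hz, abs_of_pos hz, max_eq_left (by linarith)]
        ring
      rw [hs, abs_of_nonneg (by linarith)]
      nlinarith [mul_nonneg hc0 (by linarith [le_abs_self t] : (0:ℝ) ≤ |t| - t)]

lemma soft_key (lam z t : ℝ) (hlam : 0 ≤ lam) :
    (t - softThreshold (lam/2) z) ^ 2
      + ((softThreshold (lam/2) z) ^ 2 - 2 * z * softThreshold (lam/2) z
          + lam * |softThreshold (lam/2) z|)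
      ≤ t ^ 2 - 2 * z * t + lam * |t| := by
  have h := soft_key_c (lam/2) z t (by linarith)
  have h2 : 2 * (lam / 2) = lam := by ring
  rw [h2] at h
  exact h

/-- (Theorem 1) The Lasso applied to the Puffer-preconditioned data `(FX, FY)`
equals the soft-thresholded OLS estimator `t_{λ/2}((XᵀX)⁻¹XᵀY)`. -/
theorem preconditioned_lasso_eq_soft_threshold_ols
    {n p : ℕ} (hnp : p ≤ n)
    (X : Matrix (Fin n) (Fin p) ℝ) (U : Matrix (Fin n) (Fin p) ℝ)
    (V : Matrix (Fin p) (Fin p) ℝ) (d : Fin p → ℝ)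
    (hd : ∀ i, 0 < d i)
    (hU : Uᵀ * U = 1) (hV : Vᵀ * V = 1) (hV' : V * Vᵀ = 1)
    (hX : X = U * Matrix.diagonal d * Vᵀ)
    (F : Matrix (Fin n) (Fin n) ℝ)
    (hF : F = U * Matrix.diagonal (fun i => (d i)⁻¹) * Uᵀ) :
    ∀ lam : ℝ, 0 ≤ lam → ∀ Y : Fin n → ℝ,
      ∀ f : (Fin p → ℝ) → ℝ,
        f = (fun b => ∑ i, (F.mulVec Y i - (F * X).mulVec b i) ^ 2
              + lam * ∑ j, |b j|) →
      ∀ betaHat : Fin p → ℝ,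
        betaHat = (fun j => softThreshold (lam / 2)
            ((Xᵀ * X)⁻¹.mulVec (Xᵀ.mulVec Y) j)) →
      (∀ b, f betaHat ≤ f b) ∧ ∀ b, (∀ c, f b ≤ f c) → b = betaHat := by
  -- matrix preliminaries
  have hd0 : ∀ i, d i ≠ 0 := fun i => (hd i).ne'
  have hDiD : Matrix.diagonal (fun i => (d i)⁻¹) * Matrix.diagonal d
      = (1 : Matrix (Fin p) (Fin p) ℝ) := by
    rw [Matrix.diagonal_mul_diagonal]
    have h1 : (fun i => (d i)⁻¹ * d i) = fun _ => (1:ℝ) :=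
      funext fun i => inv_mul_cancel₀ (hd0 i)
    rw [h1, Matrix.diagonal_one]
  have hE : F * X = U * Vᵀ := by
    rw [hF, hX]
    calc U * Matrix.diagonal (fun i => (d i)⁻¹) * Uᵀ * (U * Matrix.diagonal d * Vᵀ)
        = U * Matrix.diagonal (fun i => (d i)⁻¹) * (Uᵀ * U) * (Matrix.diagonal d * Vᵀ) := by
          simp only [Matrix.mul_assoc]
      _ = U * (Matrix.diagonal (fun i => (d i)⁻¹) * Matrix.diagonal d) * Vᵀ := by
          rw [hU]; simp only [Matrix.mul_one, Matrix.mul_assoc]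
      _ = U * Vᵀ := by rw [hDiD, Matrix.mul_one]
  have hEtE : (F * X)ᵀ * (F * X) = 1 := by
    rw [hE, Matrix.transpose_mul, Matrix.transpose_transpose]
    calc Vᵀᵀ * Uᵀ * (U * Vᵀ) = V * (Uᵀ * U) * Vᵀ := by
          simp only [Matrix.transpose_transpose, Matrix.mul_assoc]
      _ = 1 := by rw [hU, Matrix.mul_one, hV']
  have hXt : Xᵀ = V * Matrix.diagonal d * Uᵀ := by
    rw [hX]
    simp [Matrix.transpose_mul, Matrix.diagonal_transpose, Matrix.mul_assoc]
  have hXtX : Xᵀ * X = V * Matrix.diagonal (fun i => d i * d i) * Vᵀ := by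
    rw [hXt, hX]
    calc V * Matrix.diagonal d * Uᵀ * (U * Matrix.diagonal d * Vᵀ)
        = V * Matrix.diagonal d * (Uᵀ * U) * (Matrix.diagonal d * Vᵀ) := by
          simp only [Matrix.mul_assoc]
      _ = V * (Matrix.diagonal d * Matrix.diagonal d) * Vᵀ := by
          rw [hU]; simp only [Matrix.mul_one, Matrix.mul_assoc]
      _ = V * Matrix.diagonal (fun i => d i * d i) * Vᵀ := by
          rw [Matrix.diagonal_mul_diagonal]
  have hdd0 : ∀ i, d i * d i ≠ 0 := fun i => mul_ne_zero (hd0 i) (hd0 i)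
  have hinv : (Xᵀ * X)⁻¹ = V * Matrix.diagonal (fun i => (d i * d i)⁻¹) * Vᵀ := by
    apply Matrix.inv_eq_right_inv
    rw [hXtX]
    calc V * Matrix.diagonal (fun i => d i * d i) * Vᵀ * (V * Matrix.diagonal (fun i => (d i * d i)⁻¹) * Vᵀ)
        = V * Matrix.diagonal (fun i => d i * d i) * (Vᵀ * V) * (Matrix.diagonal (fun i => (d i * d i)⁻¹) * Vᵀ) := by
          simp only [Matrix.mul_assoc]
      _ = V * (Matrix.diagonal (fun i => d i * d i) * Matrix.diagonal (fun i => (d i * d i)⁻¹)) * Vᵀ := by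
          rw [hV]; simp only [Matrix.mul_one, Matrix.mul_assoc]
      _ = 1 := by
          rw [Matrix.diagonal_mul_diagonal]
          have h1 : (fun i => d i * d i * (d i * d i)⁻¹) = fun _ => (1:ℝ) :=
            funext fun i => mul_inv_cancel₀ (hdd0 i)
          rw [h1, Matrix.diagonal_one, Matrix.mul_one, hV']
  have hkey : (Xᵀ * X)⁻¹ * Xᵀ = (F * X)ᵀ * F := by
    rw [hinv, hXt, hE, hF, Matrix.transpose_mul, Matrix.transpose_transpose]
    calc V * Matrix.diagonal (fun i => (d i * d i)⁻¹) * Vᵀ * (V * Matrix.diagonal d * Uᵀ)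
        = V * Matrix.diagonal (fun i => (d i * d i)⁻¹) * (Vᵀ * V) * (Matrix.diagonal d * Uᵀ) := by
          simp only [Matrix.mul_assoc]
      _ = V * (Matrix.diagonal (fun i => (d i * d i)⁻¹) * Matrix.diagonal d) * Uᵀ := by
          rw [hV]; simp only [Matrix.mul_one, Matrix.mul_assoc]
      _ = V * Matrix.diagonal (fun i => (d i)⁻¹) * Uᵀ := by
          rw [Matrix.diagonal_mul_diagonal]
          congr 2
          funext i
          field_simp
      _ = V * (Uᵀ * U) * (Matrix.diagonal (fun i => (d i)⁻¹) * Uᵀ) := by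
          rw [hU]; simp only [Matrix.mul_one, Matrix.mul_assoc]
      _ = V * Uᵀ * (U * Matrix.diagonal (fun i => (d i)⁻¹) * Uᵀ) := by
          simp only [Matrix.mul_assoc]
  intro lam hlam Y f hf betaHat hbeta
  set E := F * X with hEdef
  set FY := F.mulVec Y with hFY
  set z := Eᵀ.mulVec FY with hz
  -- the OLS estimator equals z
  have hols : (Xᵀ * X)⁻¹.mulVec (Xᵀ.mulVec Y) = z := by
    rw [hz, hFY, Matrix.mulVec_mulVec, Matrix.mulVec_mulVec, hkey]
  have hbz : ∀ j, betaHat j = softThreshold (lam/2) (z j) := by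
    intro j; rw [hbeta, hols]
  -- coordinatewise decomposition of the objective
  have fsplit : ∀ b, f b = (∑ i, FY i ^ 2)
      + ∑ j, ((b j)^2 - 2 * z j * b j + lam * |b j|) := by
    intro b
    have hcross : ∑ i, FY i * (E.mulVec b) i = ∑ j, z j * b j := by
      have h : FY ⬝ᵥ E.mulVec b = z ⬝ᵥ b := by
        rw [hz, Matrix.dotProduct_mulVec, ← Matrix.mulVec_transpose]
      simpa [dotProduct] using h
    have hsq : ∑ i, ((E.mulVec b) i)^2 = ∑ j, (b j)^2 := by
      have h : (E.mulVec b) ⬝ᵥ (E.mulVec b) = b ⬝ᵥ b := by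
        rw [Matrix.dotProduct_mulVec, ← Matrix.mulVec_transpose,
          Matrix.mulVec_mulVec, hEtE, Matrix.one_mulVec]
      simpa [dotProduct, sq] using h
    have hL : ∑ i, (FY i - (E.mulVec b) i)^2
        = ∑ i, FY i ^ 2 - 2 * ∑ i, FY i * (E.mulVec b) i + ∑ i, ((E.mulVec b) i)^2 := by
      calc ∑ i, (FY i - (E.mulVec b) i)^2
          = ∑ i, (FY i ^ 2 - 2 * (FY i * (E.mulVec b) i) + ((E.mulVec b) i)^2) :=
            Finset.sum_congr rfl (fun i _ => by ring)
        _ = ∑ i, FY i ^ 2 - 2 * ∑ i, FY i * (E.mulVec b) i + ∑ i, ((E.mulVec b) i)^2 := by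
            rw [Finset.sum_add_distrib, Finset.sum_sub_distrib, Finset.mul_sum]
    have hR : ∑ j, ((b j)^2 - 2 * z j * b j + lam * |b j|)
        = ∑ j, (b j)^2 - 2 * ∑ j, z j * b j + lam * ∑ j, |b j| := by
      calc ∑ j, ((b j)^2 - 2 * z j * b j + lam * |b j|)
          = ∑ j, ((b j)^2 - 2 * (z j * b j) + lam * |b j|) :=
            Finset.sum_congr rfl (fun j _ => by ring)
        _ = ∑ j, (b j)^2 - 2 * ∑ j, z j * b j + lam * ∑ j, |b j| := by
            rw [Finset.sum_add_distrib, Finset.sum_sub_distrib, Finset.mul_sum, Finset.mul_sum]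
    rw [hf]
    simp only [← hEdef, ← hFY]
    rw [hL, hR, hcross, hsq]
    ring
  -- the key inequality
  have main : ∀ b, f betaHat + ∑ j, (b j - betaHat j)^2 ≤ f b := by
    intro b
    rw [fsplit b, fsplit betaHat]
    have hterm : ∀ j ∈ Finset.univ, ((b j - betaHat j)^2
        + ((betaHat j)^2 - 2 * z j * betaHat j + lam * |betaHat j|))
        ≤ (b j)^2 - 2 * z j * b j + lam * |b j| := by
      intro j _
      rw [hbz j]
      exact soft_key lam (z j) (b j) hlam
    have hsum := Finset.sum_le_sum hterm
    rw [Finset.sum_add_distrib] at hsum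
    linarith
  constructor
  · intro b
    have h1 := main b
    have h2 : (0:ℝ) ≤ ∑ j, (b j - betaHat j)^2 :=
      Finset.sum_nonneg (fun j _ => sq_nonneg _)
    linarith
  · intro b hb
    have h1 := main b
    have h2 := hb betaHat
    have h3 : ∑ j, (b j - betaHat j)^2 ≤ 0 := by linarith
    have h4 : ∑ j, (b j - betaHat j)^2 = 0 :=
      le_antisymm h3 (Finset.sum_nonneg (fun j _ => sq_nonneg _))
    have h5 := (Finset.sum_eq_zero_iff_of_nonneg (fun j _ => sq_nonneg (b j - betaHat j))).mp h4
    funext j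
    have h6 := h5 j (Finset.mem_univ j)
    have h7 : b j - betaHat j = 0 := by
      nlinarith [sq_nonneg (b j - betaHat j)]
    linarith
end

section
/- (Theorem 2) Let n ≥ p, X full column rank, N = diag(√((XᵀX)⁻¹_{jj})), and F_N the Puffer transform of XN. Let β̂^N(λ) be the Lasso solution for data (F_N X N, F_N Y) with penalty λ‖b‖₁ (so coordinates are t_{λ/2}(σZ_j/√n) where Z_j = √n β̂_j^OLS/(σ√((XᵀX)⁻¹_{jj}))). Then β̂_j^N(λ) ≠ 0 if and only if |Z_j| > λ√n/(2σ). -/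
/-!
Preconditioning by the Puffer transform turns the design into `F_N X N = U_N V_Nᵀ`, which has
orthonormal columns. For such a design the Lasso objective equals
`‖F_N Y‖² + ∑ⱼ (bⱼ² - 2 wⱼ bⱼ + λ |bⱼ|)` with `w = (U_N V_Nᵀ)ᵀ F_N Y`, so it separates into scalar
problems whose minimiser is nonzero exactly when `|wⱼ| > λ / 2` (soft thresholding). Finally
`V_N D_N⁻¹ U_Nᵀ` is the pseudo-inverse of `X N`, so `N w = (XᵀX)⁻¹ XᵀY = β̂^OLS`, that is
`wⱼ = σ Zⱼ / √n`.
-/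

open Matrix BigOperators

theorem soft_threshold_ne_zero_iff {w lam m : ℝ}
    (hmin : ∀ t : ℝ, m ^ 2 - 2 * w * m + lam * |m| ≤ t ^ 2 - 2 * w * t + lam * |t|) :
    m ≠ 0 ↔ lam / 2 < |w| := by
  constructor
  · intro hm
    by_contra! hw
    have hwm : 2 * w * m ≤ lam * |m| := by
      nlinarith [le_abs_self (w * m), abs_mul w m, abs_nonneg m]
    have := hmin 0
    simp only [abs_zero] at this
    exact hm (pow_eq_zero_iff two_ne_zero |>.mp (by nlinarith [sq_nonneg m]))
  · rintro hw rfl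
    -- the objective is negative at `t = sign w * (|w| - lam / 2)`
    obtain ⟨c, hc, hwc⟩ : ∃ c, 0 < c ∧ |w| = c + lam / 2 := ⟨|w| - lam / 2, by linarith, by ring⟩
    rcases abs_cases w with ⟨habs, -⟩ | ⟨habs, -⟩
    · have := hmin c
      rw [abs_of_pos hc, abs_zero] at this
      nlinarith
    · have := hmin (-c)
      rw [abs_neg, abs_of_pos hc, abs_zero] at this
      nlinarith

theorem apply_le_of_forall_sum_le_sum {ι M : Type*} [Fintype ι] [DecidableEq ι] [AddCommMonoid M]
    [PartialOrder M] [IsOrderedCancelAddMonoid M] {α : Type*} (φ : ι → α → M) {β : ι → α}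
    (hβ : ∀ b : ι → α, ∑ k, φ k (β k) ≤ ∑ k, φ k (b k)) (j : ι) (t : α) :
    φ j (β j) ≤ φ j t := by
  have h := hβ (Function.update β j t)
  simp only [Function.apply_update φ β j t, Finset.sum_update_of_mem (Finset.mem_univ j)] at h
  rw [← Finset.add_sum_erase _ _ (Finset.mem_univ j), Finset.sdiff_singleton_eq_erase] at h
  exact le_of_add_le_add_right h

theorem sum_sq_sub_mulVec_of_transpose_mul_self_eq_one {m p : Type*} [Fintype m] [Fintype p]
    [DecidableEq p] {A : Matrix m p ℝ} (hA : Aᵀ * A = 1) (y : m → ℝ) (b : p → ℝ) :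
    ∑ i, (y i - (A *ᵥ b) i) ^ 2
      = ∑ i, y i ^ 2 + ∑ k, (b k ^ 2 - 2 * (Aᵀ *ᵥ y) k * b k) := by
  have hcross : y ⬝ᵥ A *ᵥ b = (Aᵀ *ᵥ y) ⬝ᵥ b := by
    rw [dotProduct_mulVec, mulVec_transpose]
  have hquad : A *ᵥ b ⬝ᵥ A *ᵥ b = b ⬝ᵥ b := by
    rw [dotProduct_mulVec, ← mulVec_transpose, mulVec_mulVec, hA, one_mulVec]
  simp only [dotProduct] at hcross hquad
  have hterm : ∀ i, (y i - (A *ᵥ b) i) ^ 2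
      = y i ^ 2 + ((A *ᵥ b) i * (A *ᵥ b) i - 2 * (y i * (A *ᵥ b) i)) := fun i => by ring
  simp only [hterm, Finset.sum_add_distrib, Finset.sum_sub_distrib, ← Finset.mul_sum, hcross,
    hquad, sq, mul_assoc]

theorem lasso_ne_zero_iff_of_transpose_mul_self_eq_one {m p : Type*} [Fintype m] [Fintype p]
    [DecidableEq p] {A : Matrix m p ℝ} (hA : Aᵀ * A = 1) (y : m → ℝ) (lam : ℝ) {β : p → ℝ}
    (hβ : ∀ b : p → ℝ, ∑ i, (y i - (A *ᵥ β) i) ^ 2 + lam * ∑ k, |β k|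
      ≤ ∑ i, (y i - (A *ᵥ b) i) ^ 2 + lam * ∑ k, |b k|) (j : p) :
    β j ≠ 0 ↔ lam / 2 < |(Aᵀ *ᵥ y) j| := by
  refine soft_threshold_ne_zero_iff <|
    apply_le_of_forall_sum_le_sum (fun k s => s ^ 2 - 2 * (Aᵀ *ᵥ y) k * s + lam * |s|)
      (fun b => ?_) j
  have h := hβ b
  rw [sum_sq_sub_mulVec_of_transpose_mul_self_eq_one hA,
    sum_sq_sub_mulVec_of_transpose_mul_self_eq_one hA] at h
  simp only [Finset.sum_add_distrib, ← Finset.mul_sum]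
  linarith

section SVD

variable {m q r : Type*} [Fintype m] [Fintype r] [DecidableEq r]
  {U : Matrix m r ℝ} {V : Matrix q r ℝ} {d : r → ℝ}

theorem diagonal_inv_mul_diagonal (hd : ∀ i, d i ≠ 0) :
    diagonal (fun i => (d i)⁻¹) * diagonal d = 1 := by
  rw [diagonal_mul_diagonal, ← diagonal_one]
  exact congrArg diagonal (funext fun i => inv_mul_cancel₀ (hd i))

theorem diagonal_mul_diagonal_inv (hd : ∀ i, d i ≠ 0) :
    diagonal d * diagonal (fun i => (d i)⁻¹) = 1 := by
  rw [diagonal_mul_diagonal, ← diagonal_one]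
  exact congrArg diagonal (funext fun i => mul_inv_cancel₀ (hd i))

theorem puffer_mul_svd (hU : Uᵀ * U = 1) (hd : ∀ i, d i ≠ 0) :
    U * diagonal (fun i => (d i)⁻¹) * Uᵀ * (U * diagonal d * Vᵀ) = U * Vᵀ := by
  simp only [Matrix.mul_assoc]
  rw [← Matrix.mul_assoc Uᵀ, hU, Matrix.one_mul, ← Matrix.mul_assoc (diagonal _),
    diagonal_inv_mul_diagonal hd, Matrix.one_mul]

theorem transpose_mul_puffer (hU : Uᵀ * U = 1) :
    (U * Vᵀ)ᵀ * (U * diagonal (fun i => (d i)⁻¹) * Uᵀ) = V * diagonal (fun i => (d i)⁻¹) * Uᵀ := by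
  rw [transpose_mul, transpose_transpose]
  simp only [Matrix.mul_assoc]
  rw [← Matrix.mul_assoc Uᵀ, hU, Matrix.one_mul]

theorem gram_mul_transpose_eq_one [Fintype q] [DecidableEq q] (hU : Uᵀ * U = 1)
    (hV : V * Vᵀ = 1) : (U * Vᵀ)ᵀ * (U * Vᵀ) = 1 := by
  rw [transpose_mul, transpose_transpose, Matrix.mul_assoc, ← Matrix.mul_assoc Uᵀ, hU,
    Matrix.one_mul, hV]

theorem gram_svd_mul_pinv [Fintype q] (hU : Uᵀ * U = 1) (hV : Vᵀ * V = 1) (hd : ∀ i, d i ≠ 0) :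
    (U * diagonal d * Vᵀ)ᵀ * (U * diagonal d * Vᵀ) * (V * diagonal (fun i => (d i)⁻¹) * Uᵀ)
      = (U * diagonal d * Vᵀ)ᵀ := by
  simp only [transpose_mul, transpose_transpose, diagonal_transpose, Matrix.mul_assoc]
  rw [← Matrix.mul_assoc Uᵀ U, hU, Matrix.one_mul, ← Matrix.mul_assoc Vᵀ V, hV, Matrix.one_mul,
    ← Matrix.mul_assoc (diagonal d) (diagonal fun i => (d i)⁻¹), diagonal_mul_diagonal_inv hd,
    Matrix.one_mul]

end SVD

theorem mul_eq_inv_gram_mul_transpose {R m p : Type*} [CommRing R] [Fintype m] [Fintype p]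
    [DecidableEq p] {X : Matrix m p R} {N : Matrix p p R} {M : Matrix p m R}
    (hX : IsUnit (Xᵀ * X).det) (hN : IsUnit N.det) (h : (X * N)ᵀ * (X * N) * M = (X * N)ᵀ) :
    N * M = (Xᵀ * X)⁻¹ * Xᵀ := by
  have hNt : IsUnit Nᵀ.det := by rwa [det_transpose]
  have hgram : Xᵀ * X * (N * M) = Xᵀ := by
    simp only [transpose_mul, Matrix.mul_assoc] at h
    simpa only [nonsing_inv_mul_cancel_left _ _ hNt, Matrix.mul_assoc] using
      congrArg (Nᵀ⁻¹ * ·) h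
  rw [← nonsing_inv_mul_cancel_left _ (N * M) hX, hgram]

theorem preconditioned_lasso_selects_by_test_statistic_general
    {n p : ℕ} (hnp : p ≤ n)
    (X : Matrix (Fin n) (Fin p) ℝ) (hX : (Xᵀ * X).PosDef)
    (N : Matrix (Fin p) (Fin p) ℝ)
    (hN : N = Matrix.diagonal (fun j => Real.sqrt ((Xᵀ * X)⁻¹ j j)))
    -- skinny SVD of X N:
    (UN : Matrix (Fin n) (Fin p) ℝ) (VN : Matrix (Fin p) (Fin p) ℝ)
    (dN : Fin p → ℝ) (hdN : ∀ i, 0 < dN i)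
    (hUN : UNᵀ * UN = 1) (hVN : VNᵀ * VN = 1) (hVN' : VN * VNᵀ = 1)
    (hXN : X * N = UN * Matrix.diagonal dN * VNᵀ)
    (FN : Matrix (Fin n) (Fin n) ℝ)
    (hFN : FN = UN * Matrix.diagonal (fun i => (dN i)⁻¹) * UNᵀ)
    (Y : Fin n → ℝ) (lam : ℝ)
    (sigma : ℝ) (hsigma : 0 < sigma)
    (Z : Fin p → ℝ)
    (hZ : Z = fun j => Real.sqrt n * (Xᵀ * X)⁻¹.mulVec (Xᵀ.mulVec Y) j
        / (sigma * Real.sqrt ((Xᵀ * X)⁻¹ j j)))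
    (betaN : Fin p → ℝ)
    (hbetaN : ∀ b : Fin p → ℝ,
      ∑ i, (FN.mulVec Y i - (FN * (X * N)).mulVec betaN i) ^ 2
          + lam * ∑ j, |betaN j|
        ≤ ∑ i, (FN.mulVec Y i - (FN * (X * N)).mulVec b i) ^ 2
          + lam * ∑ j, |b j|) :
    ∀ j : Fin p, betaN j ≠ 0 ↔ |Z j| > lam * Real.sqrt n / (2 * sigma) := by
  intro j
  have hsqrt_n : 0 < Real.sqrt n := Real.sqrt_pos.2 (by exact_mod_cast j.pos.trans_le hnp)
  have hdiag : ∀ k, 0 < Real.sqrt ((Xᵀ * X)⁻¹ k k) := fun k => Real.sqrt_pos.2 hX.inv.diag_pos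
  have hN_unit : IsUnit N.det := by
    rw [hN, det_diagonal]
    exact (Finset.prod_pos fun k _ => hdiag k).ne'.isUnit
  have hd : ∀ i, dN i ≠ 0 := fun i => (hdN i).ne'
  have hA : FN * (X * N) = UN * VNᵀ := by rw [hFN, hXN, puffer_mul_svd hUN hd]
  have hsel := lasso_ne_zero_iff_of_transpose_mul_self_eq_one
    (gram_mul_transpose_eq_one hUN hVN') (FN *ᵥ Y) lam (hA ▸ hbetaN) j
  have hols : N * (VN * diagonal (fun i => (dN i)⁻¹) * UNᵀ) = (Xᵀ * X)⁻¹ * Xᵀ :=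
    mul_eq_inv_gram_mul_transpose hX.det_pos.ne'.isUnit hN_unit (hXN ▸ gram_svd_mul_pinv hUN hVN hd)
  have hw : (UN * VNᵀ)ᵀ *ᵥ (FN *ᵥ Y) = (VN * diagonal (fun i => (dN i)⁻¹) * UNᵀ) *ᵥ Y := by
    rw [mulVec_mulVec, hFN, transpose_mul_puffer hUN]
  have hZj : Z j = Real.sqrt n / sigma * ((UN * VNᵀ)ᵀ *ᵥ (FN *ᵥ Y)) j := by
    subst hZ
    dsimp only
    rw [mulVec_mulVec, ← hols, ← mulVec_mulVec, ← hw, hN, mulVec_diagonal]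
    field_simp [(hdiag j).ne']
  have hscale : 0 < Real.sqrt n / sigma := div_pos hsqrt_n hsigma
  rw [hsel, hZj, abs_mul, abs_of_pos hscale, gt_iff_lt,
    show lam * Real.sqrt n / (2 * sigma) = Real.sqrt n / sigma * (lam / 2) by ring,
    mul_lt_mul_iff_right₀ hscale]

/-- (Theorem 2) Let `N = diag(√((XᵀX)⁻¹_{jj}))` and `F_N` the Puffer transform of
`X N`.  Any Lasso solution `β̂^N(λ)` for the preconditioned data `(F_N X N, F_N Y)`
satisfies: `β̂_j^N(λ) ≠ 0` iff `|Z_j| > λ√n/(2σ)`, where `Z_j` is the classical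
OLS test statistic. -/
theorem preconditioned_lasso_selects_by_test_statistic
    {n p : ℕ} (hnp : p ≤ n)
    (X : Matrix (Fin n) (Fin p) ℝ) (hX : (Xᵀ * X).PosDef)
    (N : Matrix (Fin p) (Fin p) ℝ)
    (hN : N = Matrix.diagonal (fun j => Real.sqrt ((Xᵀ * X)⁻¹ j j)))
    -- skinny SVD of X N:
    (UN : Matrix (Fin n) (Fin p) ℝ) (VN : Matrix (Fin p) (Fin p) ℝ)
    (dN : Fin p → ℝ) (hdN : ∀ i, 0 < dN i)
    (hUN : UNᵀ * UN = 1) (hVN : VNᵀ * VN = 1) (hVN' : VN * VNᵀ = 1)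
    (hXN : X * N = UN * Matrix.diagonal dN * VNᵀ)
    (FN : Matrix (Fin n) (Fin n) ℝ)
    (hFN : FN = UN * Matrix.diagonal (fun i => (dN i)⁻¹) * UNᵀ)
    (Y : Fin n → ℝ) (lam : ℝ) (hlam : 0 ≤ lam)
    (sigma : ℝ) (hsigma : 0 < sigma)
    (Z : Fin p → ℝ)
    (hZ : Z = fun j => Real.sqrt n * (Xᵀ * X)⁻¹.mulVec (Xᵀ.mulVec Y) j
        / (sigma * Real.sqrt ((Xᵀ * X)⁻¹ j j)))
    (betaN : Fin p → ℝ)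
    (hbetaN : ∀ b : Fin p → ℝ,
      ∑ i, (FN.mulVec Y i - (FN * (X * N)).mulVec betaN i) ^ 2
          + lam * ∑ j, |betaN j|
        ≤ ∑ i, (FN.mulVec Y i - (FN * (X * N)).mulVec b i) ^ 2
          + lam * ∑ j, |b j|) :
    ∀ j : Fin p, betaN j ≠ 0 ↔ |Z j| > lam * Real.sqrt n / (2 * sigma) :=
  preconditioned_lasso_selects_by_test_statistic_general hnp X hX N hN UN VN dN hdN hUN hVN hVN' hXN
    FN hFN Y lam sigma hsigma Z hZ betaN hbetaN
end

section
/- (Lemma, part 2) Let p ≥ n, τ > 0, X ∈ ℝ^{n×p} with skinny SVD X = UDVᵀ, and F_τ = U(D²+τI)^{−1/2}Uᵀ. Then the ridge regression estimator satisfies (XᵀX + τI_p)⁻¹XᵀY = (F_τX)ᵀF_τY for every Y ∈ ℝⁿ. -/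
open Matrix

/-!
By the push-through identity `(XᵀX + τI)⁻¹Xᵀ = Xᵀ(XXᵀ + τI)⁻¹`, it suffices to see that
`F_τᵀF_τ = (XXᵀ + τI)⁻¹`. Both sides are diagonal in the orthonormal basis `U`: the left one
with entries `((dᵢ² + τ)^{-1/2})²`, the right one with entries `(dᵢ² + τ)⁻¹`.
-/

namespace Matrix

variable {m n : Type*} [Fintype m] [Fintype n] [DecidableEq n]

theorem isUnit_transpose_mul_self_add_smul_one (X : Matrix m n ℝ) {τ : ℝ} (hτ : 0 < τ) :
    IsUnit (Xᵀ * X + τ • (1 : Matrix n n ℝ)) := by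
  have hXX : (Xᵀ * X).PosSemidef := by
    simpa only [conjTranspose_eq_transpose_of_trivial] using posSemidef_conjTranspose_mul_self X
  have hτ1 : (τ • (1 : Matrix n n ℝ)).PosDef := by
    simpa only [smul_one_eq_diagonal] using PosDef.diagonal fun _ => hτ
  exact (hτ1.posSemidef_add hXX).isUnit

theorem transpose_mul_self_add_smul_one_inv_mul_transpose [DecidableEq m] (X : Matrix m n ℝ)
    {τ : ℝ} (hτ : 0 < τ) : (Xᵀ * X + τ • (1 : Matrix n n ℝ))⁻¹ * Xᵀ = Xᵀ * (X * Xᵀ + τ • 1)⁻¹ := by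
  have hM := (isUnit_iff_isUnit_det _).mp (isUnit_transpose_mul_self_add_smul_one X hτ)
  have hN := (isUnit_iff_isUnit_det _).mp (isUnit_transpose_mul_self_add_smul_one Xᵀ hτ)
  rw [transpose_transpose] at hN
  have hcomm : (Xᵀ * X + τ • 1) * Xᵀ = Xᵀ * (X * Xᵀ + τ • 1) := by
    simp only [Matrix.add_mul, Matrix.mul_add, Matrix.mul_assoc, Matrix.smul_mul,
      Matrix.mul_smul, Matrix.one_mul, Matrix.mul_one]
  calc (Xᵀ * X + τ • 1)⁻¹ * Xᵀ
      = (Xᵀ * X + τ • 1)⁻¹ * (Xᵀ * (X * Xᵀ + τ • 1)) * (X * Xᵀ + τ • 1)⁻¹ := by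
        rw [← Matrix.mul_assoc, mul_nonsing_inv_cancel_right _ _ hN]
    _ = Xᵀ * (X * Xᵀ + τ • 1)⁻¹ := by
        rw [← hcomm, nonsing_inv_mul_cancel_left _ _ hM]

section OrthogonalConjugation

variable {U : Matrix n n ℝ}

theorem transpose_conj_diagonal (a : n → ℝ) :
    (U * diagonal a * Uᵀ)ᵀ = U * diagonal a * Uᵀ := by
  simp only [transpose_mul, transpose_transpose, diagonal_transpose, Matrix.mul_assoc]

theorem conj_diagonal_mul_conj_diagonal (hU : Uᵀ * U = 1) (a b : n → ℝ) :
    U * diagonal a * Uᵀ * (U * diagonal b * Uᵀ) = U * diagonal (a * b) * Uᵀ := by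
  calc U * diagonal a * Uᵀ * (U * diagonal b * Uᵀ)
      = U * (diagonal a * (Uᵀ * U) * diagonal b) * Uᵀ := by simp only [Matrix.mul_assoc]
    _ = U * diagonal (a * b) * Uᵀ := by
        rw [hU, Matrix.mul_one, diagonal_mul_diagonal]
        rfl

theorem inv_conj_diagonal (hU : Uᵀ * U = 1) {a : n → ℝ} (ha : ∀ i, a i ≠ 0) :
    (U * diagonal a * Uᵀ)⁻¹ = U * diagonal a⁻¹ * Uᵀ := by
  have haa : a * a⁻¹ = fun _ => 1 := funext fun i => mul_inv_cancel₀ (ha i)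
  refine inv_eq_right_inv ?_
  rw [conj_diagonal_mul_conj_diagonal hU, haa, diagonal_one, Matrix.mul_one, mul_eq_one_comm.mp hU]

theorem smul_one_eq_conj_diagonal (hU : Uᵀ * U = 1) (τ : ℝ) :
    τ • (1 : Matrix n n ℝ) = U * diagonal (fun _ => τ) * Uᵀ := by
  rw [← smul_one_eq_diagonal, Matrix.mul_smul, Matrix.mul_one, Matrix.smul_mul,
    mul_eq_one_comm.mp hU]

theorem mul_transpose_self_eq_conj_diagonal {V : Matrix m n ℝ}
    (hV : Vᵀ * V = 1) (d : n → ℝ) :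
    U * diagonal d * Vᵀ * (U * diagonal d * Vᵀ)ᵀ = U * diagonal (d * d) * Uᵀ := by
  calc U * diagonal d * Vᵀ * (U * diagonal d * Vᵀ)ᵀ
      = U * diagonal d * (Vᵀ * V) * diagonal d * Uᵀ := by
        simp only [transpose_mul, transpose_transpose, diagonal_transpose, Matrix.mul_assoc]
    _ = U * diagonal (d * d) * Uᵀ := by
        rw [hV, Matrix.mul_one, Matrix.mul_assoc U, diagonal_mul_diagonal]
        rfl

end OrthogonalConjugation

end Matrix

theorem ridge_eq_puffer_ols_general
    {n p : ℕ}
    (X : Matrix (Fin n) (Fin p) ℝ) (U : Matrix (Fin n) (Fin n) ℝ)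
    (V : Matrix (Fin p) (Fin n) ℝ) (d : Fin n → ℝ)
    (hU' : Uᵀ * U = 1) (hV : Vᵀ * V = 1)
    (hX : X = U * Matrix.diagonal d * Vᵀ)
    (tau : ℝ) (htau : 0 < tau)
    (F : Matrix (Fin n) (Fin n) ℝ)
    (hF : F = U * Matrix.diagonal (fun i => (Real.sqrt (d i ^ 2 + tau))⁻¹) * Uᵀ) :
    ∀ Y : Fin n → ℝ,
      (Xᵀ * X + tau • (1 : Matrix (Fin p) (Fin p) ℝ))⁻¹.mulVec (Xᵀ.mulVec Y)
        = (F * X)ᵀ.mulVec (F.mulVec Y) := by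
  intro Y
  have hpos : ∀ i, 0 < d i ^ 2 + tau := fun i => by positivity
  have hgram : X * Xᵀ + tau • 1 = U * diagonal (fun i => d i ^ 2 + tau) * Uᵀ := by
    rw [hX, mul_transpose_self_eq_conj_diagonal hV, smul_one_eq_conj_diagonal hU',
      ← Matrix.add_mul, ← Matrix.mul_add, diagonal_add]
    simp only [Pi.mul_apply, sq]
  have hFF : Fᵀ * F = (X * Xᵀ + tau • 1)⁻¹ := by
    rw [hgram, inv_conj_diagonal hU' fun i => (hpos i).ne', hF, transpose_conj_diagonal,
      conj_diagonal_mul_conj_diagonal hU']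
    refine congrArg (fun a => U * diagonal a * Uᵀ) (funext fun i => ?_)
    simp only [Pi.mul_apply, Pi.inv_apply, ← mul_inv, Real.mul_self_sqrt (hpos i).le]
  rw [mulVec_mulVec, transpose_mul_self_add_smul_one_inv_mul_transpose X htau, ← hFF,
    mulVec_mulVec, transpose_mul, Matrix.mul_assoc]

/-- (Lemma, part 2) The ridge estimator satisfies
`(XᵀX + τI)⁻¹XᵀY = (F_τX)ᵀF_τY`. -/
theorem ridge_eq_puffer_ols
    {n p : ℕ} (hnp : n ≤ p)
    (X : Matrix (Fin n) (Fin p) ℝ) (U : Matrix (Fin n) (Fin n) ℝ)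
    (V : Matrix (Fin p) (Fin n) ℝ) (d : Fin n → ℝ)
    (hU : U * Uᵀ = 1) (hU' : Uᵀ * U = 1) (hV : Vᵀ * V = 1)
    (hX : X = U * Matrix.diagonal d * Vᵀ)
    (tau : ℝ) (htau : 0 < tau)
    (F : Matrix (Fin n) (Fin n) ℝ)
    (hF : F = U * Matrix.diagonal (fun i => (Real.sqrt (d i ^ 2 + tau))⁻¹) * Uᵀ) :
    ∀ Y : Fin n → ℝ,
      (Xᵀ * X + tau • (1 : Matrix (Fin p) (Fin p) ℝ))⁻¹.mulVec (Xᵀ.mulVec Y)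
        = (F * X)ᵀ.mulVec (F.mulVec Y) :=
  ridge_eq_puffer_ols_general X U V d hU' hV hX tau htau F hF
end

section
/- (Theorem 3, Lasso case) Let p ≥ n, τ > 0, X = UDVᵀ with U orthogonal, F_τ = U(D²+τI)^{−1/2}Uᵀ, 𝒫_τ(v) = Xᵀ(XXᵀ+τI)⁻¹Xv, and β̂_ridge(τ) = (XᵀX+τI)⁻¹XᵀY. If β̂ minimizes b ↦ ½‖F_τY − F_τXb‖₂² + λ‖b‖₁, then for each j: if β̂_j ≠ 0 then β̂_ridge,j(τ) − 𝒫_τ(β̂)_j = λ·sign(β̂_j), and if β̂_j = 0 then |β̂_ridge,j(τ) − 𝒫_τ(β̂)_j| ≤ λ. -/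
/-!
With `G = (XXᵀ + τI)⁻¹`, the singular value decomposition gives `FᵀF = G`, and the push-through
identity `(XᵀX + τI)⁻¹Xᵀ = XᵀG` turns `β̂_ridge(τ)` into `(FX)ᵀFY` and `𝒫_τ(β̂)` into `(FX)ᵀFXβ̂`.
Their difference is the negative gradient at `β̂` of the least-squares part of the preconditioned
Lasso objective, so the claim is the Lasso KKT condition. That condition comes from comparing the
objective at `β̂` and at `β̂ + t eⱼ` and letting `t → 0±`: the one-sided slopes of `|·|` at `β̂ⱼ`
are both `sign β̂ⱼ` when `β̂ⱼ ≠ 0`, and `±1` when `β̂ⱼ = 0`.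
-/

open Matrix Filter Topology

namespace Matrix

variable {l m n o R : Type*} [Fintype m] [Fintype n]

theorem mul_diagonal_mul_mul_diagonal_mul [DecidableEq m] [CommSemiring R] {A : Matrix l m R}
    {B : Matrix m n R} {C : Matrix n m R} {D : Matrix m o R} (h : B * C = 1) (a b : m → R) :
    A * diagonal a * B * (C * diagonal b * D) = A * diagonal (fun i => a i * b i) * D :=
  calc A * diagonal a * B * (C * diagonal b * D)
      = A * diagonal a * (B * C) * diagonal b * D := by simp only [Matrix.mul_assoc]
    _ = A * diagonal (fun i => a i * b i) * D := by
      rw [h, Matrix.mul_one, Matrix.mul_assoc A, diagonal_mul_diagonal]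

theorem mul_diagonal_mul_transpose_add_smul_one [DecidableEq m] [CommRing R] {U : Matrix m m R}
    {V : Matrix n m R} (hU : U * Uᵀ = 1) (hV : Vᵀ * V = 1) (d : m → R) (τ : R) :
    U * diagonal d * Vᵀ * (U * diagonal d * Vᵀ)ᵀ + τ • 1
      = U * diagonal (fun i => d i ^ 2 + τ) * Uᵀ := by
  have hτ : τ • (1 : Matrix m m R) = U * diagonal (fun _ => τ) * Uᵀ := by
    rw [← smul_one_eq_diagonal, Matrix.mul_smul, Matrix.mul_one, Matrix.smul_mul, hU]
  have hsq : U * diagonal d * Vᵀ * (U * diagonal d * Vᵀ)ᵀ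
      = U * diagonal (fun i => d i ^ 2) * Uᵀ := by
    have hT : (U * diagonal d * Vᵀ)ᵀ = V * diagonal d * Uᵀ := by
      simp [transpose_mul, Matrix.mul_assoc]
    simp only [hT, mul_diagonal_mul_mul_diagonal_mul hV, sq]
  rw [hsq, hτ, ← Matrix.add_mul, ← Matrix.mul_add, diagonal_add]

theorem inv_mul_diagonal_mul_transpose_add_smul_one [DecidableEq m] [Field R] {U : Matrix m m R}
    {V : Matrix n m R} (hU : U * Uᵀ = 1) (hU' : Uᵀ * U = 1) (hV : Vᵀ * V = 1) {d : m → R} {τ : R}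
    (hd : ∀ i, d i ^ 2 + τ ≠ 0) :
    (U * diagonal d * Vᵀ * (U * diagonal d * Vᵀ)ᵀ + τ • 1)⁻¹
      = U * diagonal (fun i => (d i ^ 2 + τ)⁻¹) * Uᵀ := by
  refine inv_eq_right_inv ?_
  rw [mul_diagonal_mul_transpose_add_smul_one hU hV, mul_diagonal_mul_mul_diagonal_mul hU']
  simp [hd, hU]

theorem isUnit_det_transpose_mul_self_add_smul_one (X : Matrix m n ℝ) [DecidableEq n]
    {τ : ℝ} (hτ : 0 < τ) : IsUnit (Xᵀ * X + τ • 1).det := by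
  have hpsd : (Xᵀ * X).PosSemidef := by
    simpa [conjTranspose_eq_transpose_of_trivial] using posSemidef_conjTranspose_mul_self X
  rw [← isUnit_iff_isUnit_det, add_comm]
  exact ((PosDef.one.smul hτ).add_posSemidef hpsd).isUnit

theorem inv_mul_eq_mul_inv_of_mul_eq [DecidableEq m] [DecidableEq n] [CommRing R]
    {A : Matrix m m R} {B : Matrix n n R} {M : Matrix m n R} (hA : IsUnit A.det) (hB : IsUnit B.det)
    (h : A * M = M * B) : A⁻¹ * M = M * B⁻¹ :=
  calc A⁻¹ * M = A⁻¹ * (M * B) * B⁻¹ := by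
        rw [Matrix.mul_assoc, Matrix.mul_assoc, mul_nonsing_inv B hB, Matrix.mul_one]
    _ = M * B⁻¹ := by rw [← h, ← Matrix.mul_assoc, nonsing_inv_mul A hA, Matrix.one_mul]

theorem inv_transpose_mul_self_add_smul_one_mul_transpose [DecidableEq m] [DecidableEq n]
    (X : Matrix m n ℝ) {τ : ℝ} (hτ : 0 < τ) :
    (Xᵀ * X + τ • 1)⁻¹ * Xᵀ = Xᵀ * (X * Xᵀ + τ • 1)⁻¹ := by
  refine inv_mul_eq_mul_inv_of_mul_eq (isUnit_det_transpose_mul_self_add_smul_one X hτ)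
    (by simpa using isUnit_det_transpose_mul_self_add_smul_one Xᵀ hτ) ?_
  simp only [Matrix.add_mul, Matrix.mul_add, Matrix.mul_assoc, Matrix.smul_mul, Matrix.mul_smul,
    Matrix.one_mul, Matrix.mul_one]

end Matrix

theorem le_of_eventually_nhdsGT_mul_le {C A M : ℝ}
    (h : ∀ᶠ t in 𝓝[>] (0 : ℝ), t * C ≤ t * (t * M + A)) : C ≤ A := by
  have hlim : Tendsto (fun t : ℝ => t * M + A) (𝓝 0) (𝓝 A) := by
    simpa using ((tendsto_id.mul_const M).add_const A : Tendsto _ (𝓝 (0 : ℝ)) _)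
  refine ge_of_tendsto (x := 𝓝[>] (0 : ℝ)) (hlim.mono_left nhdsWithin_le_nhds) ?_
  filter_upwards [h, self_mem_nhdsWithin] with t ht htpos
  exact le_of_mul_le_mul_left ht htpos

theorem ge_of_eventually_nhdsLT_mul_le {C A M : ℝ}
    (h : ∀ᶠ t in 𝓝[<] (0 : ℝ), t * C ≤ t * (t * M + A)) : A ≤ C := by
  have hlim : Tendsto (fun t : ℝ => t * M + A) (𝓝 0) (𝓝 A) := by
    simpa using ((tendsto_id.mul_const M).add_const A : Tendsto _ (𝓝 (0 : ℝ)) _)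
  refine le_of_tendsto (x := 𝓝[<] (0 : ℝ)) (hlim.mono_left nhdsWithin_le_nhds) ?_
  filter_upwards [h, self_mem_nhdsWithin] with t ht htneg
  exact (mul_le_mul_left_of_neg htneg).mp ht

theorem subgradient_abs_of_forall_mul_le {C M lam β : ℝ}
    (h : ∀ t, t * C ≤ t ^ 2 * M + lam * (|β + t| - |β|)) :
    (β ≠ 0 → C = lam * Real.sign β) ∧ (β = 0 → |C| ≤ lam) := by
  have slope : ∀ {s t : ℝ}, |β + t| - |β| = t * s → t * C ≤ t * (t * M + lam * s) := by
    intro s t hs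
    linarith [hs ▸ h t]
  have upper : ∀ s, (∀ᶠ t in 𝓝[>] (0 : ℝ), |β + t| - |β| = t * s) → C ≤ lam * s :=
    fun s hs => le_of_eventually_nhdsGT_mul_le (hs.mono fun _ => slope)
  have lower : ∀ s, (∀ᶠ t in 𝓝[<] (0 : ℝ), |β + t| - |β| = t * s) → lam * s ≤ C :=
    fun s hs => ge_of_eventually_nhdsLT_mul_le (hs.mono fun _ => slope)
  have two_sided : ∀ s, (∀ᶠ t in 𝓝 (0 : ℝ), |β + t| - |β| = t * s) → C = lam * s :=
    fun s hs => le_antisymm (upper s (nhdsWithin_le_nhds hs)) (lower s (nhdsWithin_le_nhds hs))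
  rcases lt_trichotomy β 0 with hβ | rfl | hβ
  · refine ⟨fun _ => Real.sign_of_neg hβ ▸ two_sided (-1) ?_, fun h0 => absurd h0 hβ.ne⟩
    filter_upwards [eventually_lt_nhds (neg_pos.mpr hβ)] with t ht
    rw [abs_of_neg hβ, abs_of_neg (by linarith)]
    ring
  · refine ⟨fun h0 => absurd rfl h0, fun _ => abs_le.mpr ⟨?_, ?_⟩⟩
    · have := lower (-1) <| by
        filter_upwards [self_mem_nhdsWithin] with t (ht : t < 0)
        rw [zero_add, abs_zero, abs_of_neg ht]
        ring
      linarith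
    · have := upper 1 <| by
        filter_upwards [self_mem_nhdsWithin] with t (ht : 0 < t)
        rw [zero_add, abs_zero, abs_of_pos ht]
        ring
      linarith
  · refine ⟨fun _ => Real.sign_of_pos hβ ▸ two_sided 1 ?_, fun h0 => absurd h0 hβ.ne'⟩
    filter_upwards [eventually_gt_nhds (neg_neg_of_pos hβ)] with t ht
    rw [abs_of_pos hβ, abs_of_pos (by linarith)]
    ring

section Lasso

variable {m p : Type*} [Fintype m] [Fintype p]

noncomputable def lassoObjective (A : Matrix m p ℝ) (y : m → ℝ) (lam : ℝ) (b : p → ℝ) : ℝ :=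
  (1 / 2) * ∑ i, (y i - (A *ᵥ b) i) ^ 2 + lam * ∑ j, |b j|

theorem lassoObjective_add_single [DecidableEq p] (A : Matrix m p ℝ) (y : m → ℝ) (lam : ℝ)
    (β : p → ℝ) (j : p) (t : ℝ) :
    lassoObjective A y lam (β + (Pi.single j t : p → ℝ)) = lassoObjective A y lam β
      - t * (Aᵀ *ᵥ (y - A *ᵥ β)) j + t ^ 2 * ((1 / 2) * ∑ i, A i j ^ 2)
      + lam * (|β j + t| - |β j|) := by
  have hquad : ∑ i, (y i - (A *ᵥ (β + (Pi.single j t : p → ℝ))) i) ^ 2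
      = ∑ i, (y i - (A *ᵥ β) i) ^ 2 - 2 * t * (Aᵀ *ᵥ (y - A *ᵥ β)) j
        + t ^ 2 * ∑ i, A i j ^ 2 := by
    have hcol : ∀ i, (A *ᵥ (β + (Pi.single j t : p → ℝ))) i = (A *ᵥ β) i + t * A i j := by
      intro i
      simp [mulVec_add, mulVec_single]
    simp only [hcol, mulVec_transpose, vecMul, dotProduct, Pi.sub_apply, Finset.mul_sum,
      ← Finset.sum_sub_distrib, ← Finset.sum_add_distrib]
    refine Finset.sum_congr rfl fun i _ => ?_
    ring
  have hl1 : ∑ k, |(β + (Pi.single j t : p → ℝ)) k| = ∑ k, |β k| + (|β j + t| - |β j|) := by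
    rw [← sub_eq_iff_eq_add', ← Finset.sum_sub_distrib, Fintype.sum_eq_single j]
    · simp
    · intro k hk
      simp [hk]
  unfold lassoObjective
  rw [hquad, hl1]
  ring

theorem lassoObjective_optimality [DecidableEq p] {A : Matrix m p ℝ} {y : m → ℝ} {lam : ℝ}
    {β : p → ℝ} (hmin : ∀ b, lassoObjective A y lam β ≤ lassoObjective A y lam b) (j : p) :
    (β j ≠ 0 → (Aᵀ *ᵥ (y - A *ᵥ β)) j = lam * Real.sign (β j)) ∧
      (β j = 0 → |(Aᵀ *ᵥ (y - A *ᵥ β)) j| ≤ lam) :=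
  subgradient_abs_of_forall_mul_le (M := (1 / 2) * ∑ i, A i j ^ 2) fun t => by
    linarith [hmin (β + (Pi.single j t : p → ℝ)), lassoObjective_add_single A y lam β j t]

end Lasso

theorem preconditioned_lasso_close_to_ridge_general
    {n p : ℕ}
    (X : Matrix (Fin n) (Fin p) ℝ) (U : Matrix (Fin n) (Fin n) ℝ)
    (V : Matrix (Fin p) (Fin n) ℝ) (d : Fin n → ℝ)
    (hU : U * Uᵀ = 1) (hU' : Uᵀ * U = 1) (hV : Vᵀ * V = 1)
    (hX : X = U * Matrix.diagonal d * Vᵀ)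
    (tau : ℝ) (htau : 0 < tau)
    (F : Matrix (Fin n) (Fin n) ℝ)
    (hF : F = U * Matrix.diagonal (fun i => (Real.sqrt (d i ^ 2 + tau))⁻¹) * Uᵀ)
    (Y : Fin n → ℝ) (lam : ℝ)
    (betaHat : Fin p → ℝ)
    (hmin : ∀ b : Fin p → ℝ,
      (1 / 2) * ∑ i, (F.mulVec Y i - (F * X).mulVec betaHat i) ^ 2
          + lam * ∑ j, |betaHat j|
        ≤ (1 / 2) * ∑ i, (F.mulVec Y i - (F * X).mulVec b i) ^ 2
          + lam * ∑ j, |b j|)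
    (ridge : Fin p → ℝ)
    (hridge : ridge = (Xᵀ * X + tau • (1 : Matrix (Fin p) (Fin p) ℝ))⁻¹.mulVec
        (Xᵀ.mulVec Y))
    (Pbeta : Fin p → ℝ)
    (hP : Pbeta = Xᵀ.mulVec ((X * Xᵀ + tau • (1 : Matrix (Fin n) (Fin n) ℝ))⁻¹.mulVec
        (X.mulVec betaHat))) :
    ∀ j : Fin p,
      (betaHat j ≠ 0 → ridge j - Pbeta j = lam * Real.sign (betaHat j)) ∧
      (betaHat j = 0 → |ridge j - Pbeta j| ≤ lam) := by
  have hFF : Fᵀ * F = (X * Xᵀ + tau • 1)⁻¹ := by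
    have hsqrt : ∀ i, (√(d i ^ 2 + tau))⁻¹ * (√(d i ^ 2 + tau))⁻¹ = (d i ^ 2 + tau)⁻¹ :=
      fun i => by rw [← mul_inv, Real.mul_self_sqrt (by positivity)]
    have hFt : Fᵀ = F := by simp [hF, transpose_mul, Matrix.mul_assoc]
    rw [hX, inv_mul_diagonal_mul_transpose_add_smul_one hU hU' hV (fun i => by positivity), hFt,
      hF, mul_diagonal_mul_mul_diagonal_mul hU']
    simp only [hsqrt]
  have hridge' : ridge = (F * X)ᵀ *ᵥ (F *ᵥ Y) := by
    rw [hridge, mulVec_mulVec, inv_transpose_mul_self_add_smul_one_mul_transpose X htau, ← hFF,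
      mulVec_mulVec, transpose_mul, Matrix.mul_assoc]
  have hP' : Pbeta = (F * X)ᵀ *ᵥ ((F * X) *ᵥ betaHat) := by
    rw [hP, mulVec_mulVec, mulVec_mulVec, mulVec_mulVec, ← hFF, transpose_mul]
    simp only [Matrix.mul_assoc]
  intro j
  have hkkt := lassoObjective_optimality hmin j
  rwa [mulVec_sub, Pi.sub_apply, ← hridge', ← hP'] at hkkt

/-- (Theorem 3, Lasso case) If `β̂` minimizes the preconditioned Lasso objective
`½‖F_τY − F_τXb‖₂² + λ‖b‖₁`, then coordinatewise the ridge estimator and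
`𝒫_τ(β̂)` differ by at most `λ`, with equality structure given by the sign. -/
theorem preconditioned_lasso_close_to_ridge
    {n p : ℕ} (hnp : n ≤ p)
    (X : Matrix (Fin n) (Fin p) ℝ) (U : Matrix (Fin n) (Fin n) ℝ)
    (V : Matrix (Fin p) (Fin n) ℝ) (d : Fin n → ℝ)
    (hU : U * Uᵀ = 1) (hU' : Uᵀ * U = 1) (hV : Vᵀ * V = 1)
    (hX : X = U * Matrix.diagonal d * Vᵀ)
    (tau : ℝ) (htau : 0 < tau)
    (F : Matrix (Fin n) (Fin n) ℝ)
    (hF : F = U * Matrix.diagonal (fun i => (Real.sqrt (d i ^ 2 + tau))⁻¹) * Uᵀ)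
    (Y : Fin n → ℝ) (lam : ℝ) (hlam : 0 ≤ lam)
    (betaHat : Fin p → ℝ)
    (hmin : ∀ b : Fin p → ℝ,
      (1 / 2) * ∑ i, (F.mulVec Y i - (F * X).mulVec betaHat i) ^ 2
          + lam * ∑ j, |betaHat j|
        ≤ (1 / 2) * ∑ i, (F.mulVec Y i - (F * X).mulVec b i) ^ 2
          + lam * ∑ j, |b j|)
    (ridge : Fin p → ℝ)
    (hridge : ridge = (Xᵀ * X + tau • (1 : Matrix (Fin p) (Fin p) ℝ))⁻¹.mulVec
        (Xᵀ.mulVec Y))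
    (Pbeta : Fin p → ℝ)
    (hP : Pbeta = Xᵀ.mulVec ((X * Xᵀ + tau • (1 : Matrix (Fin n) (Fin n) ℝ))⁻¹.mulVec
        (X.mulVec betaHat))) :
    ∀ j : Fin p,
      (betaHat j ≠ 0 → ridge j - Pbeta j = lam * Real.sign (betaHat j)) ∧
      (betaHat j = 0 → |ridge j - Pbeta j| ≤ lam) :=
  preconditioned_lasso_close_to_ridge_general X U V d hU hU' hV hX tau htau F hF Y lam betaHat hmin
    ridge hridge Pbeta hP
end
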